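/- Define μ₀(θ) = θ·sin(θ/2)/(2π·sin²(θ/4)) and μ₁(θ) = (π·sin(θ/2)/θ)². Both μ₀ and μ₁ are decreasing on (0, 2π), and μ₀(π) = μ₁(π) = 1; consequently μ₀(θ) ≥ 1 and μ₁(θ) ≥ 1 for 0 < θ < π, and μ₀(θ) ≤ 1 and μ₁(θ) ≤ 1 for π < θ < 2π. -/

import Mathlib

/-!
By `sin (2x) = 2 sin x cos x`, `μ₀ θ = (4 / π) · x cot x` with `x = θ / 4`, and
`μ₁ θ = (π / 2 · sin x / x)²` with `x = θ / 2`. On `(0, π)` the function `sin x / x` is the secant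
slope through the origin of the strictly concave `sin`, and `x cot x` has derivative
`(sin (2x) / 2 - x) / sin² x < 0`; so both are strictly decreasing, and the inequalities follow
from the values at `θ = π`.
-/

open Real Set

noncomputable def mu0 (θ : ℝ) : ℝ :=
  θ * Real.sin (θ / 2) / (2 * Real.pi * (Real.sin (θ / 4))^2)

noncomputable def mu1 (θ : ℝ) : ℝ := (Real.pi * Real.sin (θ / 2) / θ)^2

lemma strictAntiOn_sin_div_self : StrictAntiOn (fun x => sin x / x) (Ioc 0 π) := by
  intro x hx y hy hxy
  simpa using strictConcaveOn_sin_Icc.secant_strict_mono (a := 0) ⟨le_rfl, pi_pos.le⟩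
    (Ioc_subset_Icc_self hx) (Ioc_subset_Icc_self hy) hx.1.ne' hy.1.ne' hxy

lemma hasDerivAt_mul_cos_div_sin {x : ℝ} (hx : sin x ≠ 0) :
    HasDerivAt (fun x => x * cos x / sin x) ((sin (2 * x) / 2 - x) / sin x ^ 2) x := by
  refine (((hasDerivAt_id x).mul (hasDerivAt_cos x)).div (hasDerivAt_sin x) hx).congr_deriv ?_
  simp only [Pi.mul_apply, id, sin_two_mul]
  field_simp
  linear_combination -x * sin_sq_add_cos_sq x

lemma strictAntiOn_mul_cos_div_sin : StrictAntiOn (fun x => x * cos x / sin x) (Ioo 0 π) := by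
  have hsin : ∀ x ∈ Ioo 0 π, sin x ≠ 0 := fun x hx => (sin_pos_of_pos_of_lt_pi hx.1 hx.2).ne'
  refine strictAntiOn_of_hasDerivWithinAt_neg (convex_Ioo 0 π) ?_
    (fun x hx => (hasDerivAt_mul_cos_div_sin (hsin x (interior_subset hx))).hasDerivWithinAt)
    (fun x hx => ?_)
  · exact (continuousOn_id.mul continuous_cos.continuousOn).div continuous_sin.continuousOn hsin
  · rw [interior_Ioo] at hx
    have hsin_lt : sin (2 * x) < 2 * x := sin_lt (by linarith [hx.1])
    exact div_neg_of_neg_of_pos (by linarith) (pow_pos (sin_pos_of_pos_of_lt_pi hx.1 hx.2) 2)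

lemma mu0_eq {θ : ℝ} (h : sin (θ / 4) ≠ 0) :
    mu0 θ = 4 / π * (θ / 4 * cos (θ / 4) / sin (θ / 4)) := by
  rw [mu0, show θ / 2 = 2 * (θ / 4) by ring, sin_two_mul]
  field_simp

lemma mu1_eq (θ : ℝ) : mu1 θ = (π / 2 * (sin (θ / 2) / (θ / 2))) ^ 2 := by
  rw [mu1]
  congr 1
  rw [div_div_eq_mul_div]
  ring

lemma strictAntiOn_mu0 : StrictAntiOn mu0 (Ioo 0 (2 * π)) := by
  have quarter : ∀ θ ∈ Ioo 0 (2 * π), θ / 4 ∈ Ioo 0 π := fun θ hθ =>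
    ⟨by linarith [hθ.1], by linarith [hθ.2, pi_pos]⟩
  have hsin : ∀ θ ∈ Ioo 0 (2 * π), sin (θ / 4) ≠ 0 := fun θ hθ =>
    (sin_pos_of_pos_of_lt_pi (quarter θ hθ).1 (quarter θ hθ).2).ne'
  intro a ha b hb hab
  rw [mu0_eq (hsin a ha), mu0_eq (hsin b hb)]
  exact mul_lt_mul_of_pos_left
    (strictAntiOn_mul_cos_div_sin (quarter a ha) (quarter b hb) (by linarith)) (by positivity)

lemma strictAntiOn_mu1 : StrictAntiOn mu1 (Ioo 0 (2 * π)) := by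
  have half : ∀ θ ∈ Ioo 0 (2 * π), θ / 2 ∈ Ioc 0 π := fun θ hθ =>
    ⟨by linarith [hθ.1], by linarith [hθ.2]⟩
  intro a ha b hb hab
  rw [mu1_eq, mu1_eq]
  have hb2 := half b hb
  have hpos : 0 < sin (b / 2) / (b / 2) :=
    div_pos (sin_pos_of_pos_of_lt_pi hb2.1 (by linarith [hb.2])) hb2.1
  refine pow_lt_pow_left₀ (mul_lt_mul_of_pos_left ?_ (by positivity))
    (mul_pos (by positivity) hpos).le two_ne_zero
  exact strictAntiOn_sin_div_self (half a ha) hb2 (by linarith)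

lemma mu0_pi : mu0 π = 1 := by
  rw [mu0, sin_pi_div_two, sin_pi_div_four, div_pow, sq_sqrt zero_le_two]
  field_simp

lemma mu1_pi : mu1 π = 1 := by
  rw [mu1, sin_pi_div_two, mul_one, div_self pi_ne_zero, one_pow]

theorem stmt14 :
    AntitoneOn mu0 (Set.Ioo 0 (2 * Real.pi)) ∧
    AntitoneOn mu1 (Set.Ioo 0 (2 * Real.pi)) ∧
    mu0 Real.pi = 1 ∧ mu1 Real.pi = 1 ∧
    (∀ θ : ℝ, 0 < θ → θ < Real.pi → 1 ≤ mu0 θ ∧ 1 ≤ mu1 θ) ∧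
    (∀ θ : ℝ, Real.pi < θ → θ < 2 * Real.pi → mu0 θ ≤ 1 ∧ mu1 θ ≤ 1) := by
  have h0 := strictAntiOn_mu0.antitoneOn
  have h1 := strictAntiOn_mu1.antitoneOn
  have hπ : π ∈ Ioo 0 (2 * π) := ⟨pi_pos, by linarith [pi_pos]⟩
  refine ⟨h0, h1, mu0_pi, mu1_pi, fun θ hθ hθπ => ?_, fun θ hπθ hθ => ?_⟩
  · have hmem : θ ∈ Ioo 0 (2 * π) := ⟨hθ, by linarith⟩
    exact ⟨mu0_pi ▸ h0 hmem hπ hθπ.le, mu1_pi ▸ h1 hmem hπ hθπ.le⟩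
  · have hmem : θ ∈ Ioo 0 (2 * π) := ⟨by linarith, hθ⟩
    exact ⟨mu0_pi ▸ h0 hπ hmem hπθ.le, mu1_pi ▸ h1 hπ hmem hπθ.le⟩
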